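/- arXiv:2204.05012 — 3 statements merged into one kernel-verified Lean document; each statement's English description precedes it below -/
import Mathlib

section
/- Let f be a continuous real-valued function on [0,1]. For integers m and n ≥ 1 put p_{m,n}(x) = C(n,m) x^m (1−x)^{n−m}, where C(n,m) = 0 if m > n or m < 0, and define F_n(x) = Σ_{m=0}^{n} (f(m/n)/(n+1)) Σ_{j=m+1}^{n+1} p_{j,n+1}(x). Then the sequence of polynomials (F_n) converges uniformly on [0,1] to a continuous function F which is differentiable at every point of the open interval (0,1) with F'(x) = f(x) for all x ∈ (0,1). -/
open Set Filter Topology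

/-- `p m n x = C(n,m) x^m (1-x)^{n-m}` (here `Nat.choose n m = 0` when `m > n`). -/
noncomputable def p (m n : ℕ) (x : ℝ) : ℝ :=
  (n.choose m : ℝ) * x ^ m * (1 - x) ^ (n - m)

/-- `F f n x = Σ_{m=0}^{n} (f(m/n)/(n+1)) Σ_{j=m+1}^{n+1} p_{j,n+1}(x)`. -/
noncomputable def F (f : ℝ → ℝ) (n : ℕ) (x : ℝ) : ℝ :=
  ∑ m ∈ Finset.range (n + 1),
    f ((m : ℝ) / (n : ℝ)) / ((n : ℝ) + 1) *
      ∑ j ∈ Finset.Icc (m + 1) (n + 1), p j (n + 1) x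

/-!
`F n` is the primitive vanishing at `0` of the Bernstein polynomial
`B n = ∑_{m ≤ n} f(m/n) p_{m,n}` (`bernsteinSum f n`): the derivative of `∑_{j > m} p_{j,n+1}`
telescopes to `(n+1) p_{m,n}`. Since `B n → f` uniformly on `[0,1]` (Bernstein's theorem), the
primitives converge uniformly to `x ↦ ∫₀ˣ f`, and the fundamental theorem of calculus gives the
derivative.
-/

open MeasureTheory

theorem TendstoUniformlyOn.intervalIntegral_primitive {ι E : Type*} [NormedAddCommGroup E]
    [NormedSpace ℝ E] {l : Filter ι} {g : ι → ℝ → E} {G : ℝ → E} {a b : ℝ}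
    (hg : ∀ᶠ i in l, IntegrableOn (g i) (Icc a b)) (hG : IntegrableOn G (Icc a b))
    (h : TendstoUniformlyOn g G l (Icc a b)) :
    TendstoUniformlyOn (fun i x => ∫ t in a..x, g i t) (fun x => ∫ t in a..x, G t) l
      (Icc a b) := by
  rw [Metric.tendstoUniformlyOn_iff]
  intro ε hε
  set δ := ε / (|b - a| + 1)
  have hδ : 0 < δ := by positivity
  filter_upwards [hg, Metric.tendstoUniformlyOn_iff.mp h δ hδ] with i hgi hi x hx
  have hsub : uIcc a x ⊆ Icc a b := by
    rw [uIcc_of_le hx.1]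
    exact Icc_subset_Icc_right hx.2
  rw [dist_eq_norm, ← intervalIntegral.integral_sub ((hG.mono_set hsub).intervalIntegrable)
    ((hgi.mono_set hsub).intervalIntegrable)]
  have hbound : ∀ t ∈ uIoc a x, ‖G t - g i t‖ ≤ δ := fun t ht =>
    (dist_eq_norm (G t) (g i t) ▸ hi t (hsub (uIoc_subset_uIcc ht))).le
  calc ‖∫ t in a..x, (G t - g i t)‖
      ≤ δ * |x - a| := intervalIntegral.norm_integral_le_of_norm_le_const hbound
    _ ≤ δ * |b - a| := mul_le_mul_of_nonneg_left
        (abs_le_abs (by linarith [hx.2]) (by linarith [hx.1, hx.2])) hδ.le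
    _ < δ * (|b - a| + 1) := by gcongr; linarith
    _ = ε := div_mul_cancel₀ ε (by positivity)

lemma p_eq_eval (m n : ℕ) : p m n = fun x => (bernsteinPolynomial ℝ n m).eval x := by
  ext x
  simp [p, bernsteinPolynomial]

lemma p_of_lt {m n : ℕ} (h : n < m) (x : ℝ) : p m n x = 0 := by
  simp [p, Nat.choose_eq_zero_of_lt h]

lemma hasDerivAt_p_succ (k n : ℕ) (x : ℝ) :
    HasDerivAt (p (k + 1) (n + 1)) ((n + 1) * (p k n x - p (k + 1) n x)) x := by
  have h := (bernsteinPolynomial ℝ (n + 1) (k + 1)).hasDerivAt x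
  rw [bernsteinPolynomial.derivative_succ_aux] at h
  simpa [p_eq_eval] using h

lemma hasDerivAt_sum_Icc_p (m n : ℕ) (x : ℝ) :
    HasDerivAt (fun y => ∑ j ∈ Finset.Icc (m + 1) (n + 1), p j (n + 1) y)
      ((n + 1) * p m n x) x := by
  have hshift : ∀ y, ∑ j ∈ Finset.Icc (m + 1) (n + 1), p j (n + 1) y
      = ∑ k ∈ Finset.Ico m (n + 1), p (k + 1) (n + 1) y := fun y => by
    rw [Finset.sum_Ico_add' (fun j => p j (n + 1) y)]
    rfl
  have telescope : ∑ k ∈ Finset.Ico m (n + 1), (p k n x - p (k + 1) n x) = p m n x := by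
    rcases le_or_gt m (n + 1) with hm | hm
    · have h := Finset.sum_Ico_sub (fun k => -p k n x) hm
      simp only [sub_neg_eq_add, neg_add_eq_sub] at h
      rw [h, p_of_lt (Nat.lt_succ_self n), sub_zero]
    · rw [Finset.Ico_eq_empty_of_le hm.le, p_of_lt (by omega), Finset.sum_empty]
  have h := HasDerivAt.fun_sum (u := Finset.Ico m (n + 1)) fun k _ => hasDerivAt_p_succ k n x
  rw [← Finset.mul_sum, telescope] at h
  simpa only [hshift] using h

noncomputable def bernsteinSum (f : ℝ → ℝ) (n : ℕ) (x : ℝ) : ℝ :=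
  ∑ m ∈ Finset.range (n + 1), f ((m : ℝ) / (n : ℝ)) * p m n x

lemma continuous_bernsteinSum (f : ℝ → ℝ) (n : ℕ) : Continuous (bernsteinSum f n) := by
  unfold bernsteinSum p
  fun_prop

lemma tendstoUniformlyOn_bernsteinSum {f : ℝ → ℝ} (hf : ContinuousOn f (Icc 0 1)) :
    TendstoUniformlyOn (bernsteinSum f) f atTop (Icc 0 1) := by
  rw [tendstoUniformlyOn_iff_tendstoUniformly_comp_coe]
  convert ContinuousMap.tendsto_iff_tendstoUniformly.mp
    (bernsteinApproximation_uniform ⟨(Icc 0 1).domRestrict f, hf.domRestrict⟩) using 1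
  · ext n x
    simp only [bernsteinApproximation.apply, bernsteinSum, bernstein_apply, smul_eq_mul,
      Finset.sum_range fun m => f ((m : ℝ) / n) * p m n x]
    exact Finset.sum_congr rfl fun k _ => by rw [mul_comm]; rfl
  · rfl

lemma hasDerivAt_F (f : ℝ → ℝ) (n : ℕ) (x : ℝ) : HasDerivAt (F f n) (bernsteinSum f n x) x := by
  have h := HasDerivAt.fun_sum (u := Finset.range (n + 1)) fun m _ =>
    (hasDerivAt_sum_Icc_p m n x).const_mul (f ((m : ℝ) / n) / ((n : ℝ) + 1))
  refine h.congr_deriv (Finset.sum_congr rfl fun m _ => ?_)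
  field_simp

lemma F_zero (f : ℝ → ℝ) (n : ℕ) : F f n 0 = 0 := by
  refine Finset.sum_eq_zero fun m _ => ?_
  rw [Finset.sum_eq_zero fun j hj => ?_, mul_zero]
  simp [p, zero_pow (by simp at hj; omega : j ≠ 0)]

lemma F_eq_integral_bernsteinSum (f : ℝ → ℝ) (n : ℕ) :
    F f n = fun x => ∫ t in (0 : ℝ)..x, bernsteinSum f n t := by
  ext x
  rw [intervalIntegral.integral_eq_sub_of_hasDerivAt (fun t _ => hasDerivAt_F f n t)
    ((continuous_bernsteinSum f n).intervalIntegrable 0 x), F_zero, sub_zero]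

/-- The polynomials `F n` converge uniformly on `[0,1]` to a continuous function `Flim`
which is differentiable on `(0,1)` with derivative `f`. -/
theorem F_tendstoUniformly_primitive (f : ℝ → ℝ) (hf : ContinuousOn f (Set.Icc 0 1)) :
    ∃ Flim : ℝ → ℝ,
      TendstoUniformlyOn (fun n => F f n) Flim atTop (Set.Icc 0 1) ∧
      ContinuousOn Flim (Set.Icc 0 1) ∧
      ∀ x ∈ Set.Ioo (0 : ℝ) 1, HasDerivAt Flim (f x) x := by
  have hint : IntegrableOn f (Icc 0 1) := hf.integrableOn_Icc
  refine ⟨fun x => ∫ t in (0 : ℝ)..x, f t, ?_, ?_, fun x hx => ?_⟩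
  · simp only [F_eq_integral_bernsteinSum]
    exact (tendstoUniformlyOn_bernsteinSum hf).intervalIntegral_primitive
      (.of_forall fun n => (continuous_bernsteinSum f n).integrableOn_Icc) hint
  · simpa using intervalIntegral.continuousOn_primitive_interval (a := 0) (b := 1)
      (by simpa using hint)
  · have hx' : Icc 0 x ⊆ Icc 0 1 := Icc_subset_Icc_right hx.2.le
    exact intervalIntegral.integral_hasDerivAt_right
      ((hf.mono hx').intervalIntegrable_of_Icc hx.1.le)
      ((hf.mono Ioo_subset_Icc_self).stronglyMeasurableAtFilter isOpen_Ioo x hx)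
      (hf.continuousAt (Icc_mem_nhds hx.1 hx.2))
end

section
/- Let f be a continuous real-valued function on [0,1], let ε > 0 and δ > 0 be such that |f(x₁) − f(x₂)| < ε/2 whenever x₁, x₂ ∈ [0,1] and |x₁ − x₂| < δ, and let n be an integer with n > 4‖f‖/(ε δ²), where ‖f‖ = sup_{x ∈ [0,1]} |f(x)|. Then for every x ∈ [0,1], |f(x) − f_n(x)| < ε, where f_n(x) = Σ_{m=0}^{n} f(m/n) p_{m,n}(x) is the n-th Bernstein polynomial of f and p_{m,n}(x) = C(n,m) x^m (1−x)^{n−m}. -/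
/-! Write `p_m(x) = C(n,m) xᵐ (1-x)ⁿ⁻ᵐ`. These weights are nonnegative on `[0,1]`, sum to `1`,
and have variance `∑ (x - m/n)² p_m(x) = x(1-x)/n ≤ 1/(4n)` about `x`. Splitting according to
whether `|x - m/n| < δ`, every term satisfies `|f x - f(m/n)| ≤ ε/2 + (2‖f‖/δ²)(x - m/n)²`, so
averaging against `p_m(x)` gives `|f x - f_n x| ≤ ε/2 + ‖f‖/(2δ²n)`, which is `< ε` by the choice
of `n`. -/

open Finset

lemma IsCompact.abs_le_iSup_abs {s : Set ℝ} (hs : IsCompact s) {f : ℝ → ℝ}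
    (hf : ContinuousOn f s) {x : ℝ} (hx : x ∈ s) : |f x| ≤ ⨆ y : s, |f y| := by
  have hbdd : BddAbove (Set.range fun y : s => |f y|) := by
    simpa only [Set.image_eq_range] using (hs.image_of_continuousOn hf.abs).bddAbove
  exact le_ciSup hbdd ⟨x, hx⟩

lemma abs_sub_sum_mul_le_sum_mul {ι : Type*} {s : Finset ι} {w b c : ι → ℝ} {a : ℝ}
    (hw : ∀ i ∈ s, 0 ≤ w i) (hw₁ : ∑ i ∈ s, w i = 1) (h : ∀ i ∈ s, |a - b i| ≤ c i) :
    |a - ∑ i ∈ s, b i * w i| ≤ ∑ i ∈ s, c i * w i := by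
  have hsub : a - ∑ i ∈ s, b i * w i = ∑ i ∈ s, (a - b i) * w i := by
    simp_rw [sub_mul, sum_sub_distrib, ← mul_sum, hw₁, mul_one]
  rw [hsub]
  refine (abs_sum_le_sum_abs _ _).trans (sum_le_sum fun i hi => ?_)
  rw [abs_mul, abs_of_nonneg (hw i hi)]
  exact mul_le_mul_of_nonneg_right (h i hi) (hw i hi)

lemma abs_le_add_div_sq_mul_sq {a d η δ B : ℝ} (hη : 0 ≤ η) (hδ : 0 < δ) (hB : |a| ≤ B)
    (hsmall : |d| < δ → |a| < η) : |a| ≤ η + B / δ ^ 2 * d ^ 2 := by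
  have hB₀ : 0 ≤ B := (abs_nonneg a).trans hB
  rcases lt_or_ge |d| δ with hd | hd
  · have : 0 ≤ B / δ ^ 2 * d ^ 2 := by positivity
    linarith [hsmall hd]
  · have hδd : δ ^ 2 ≤ d ^ 2 := by simpa only [sq_abs] using pow_le_pow_left₀ hδ.le hd 2
    have : B ≤ B / δ ^ 2 * d ^ 2 := by
      rw [div_mul_eq_mul_div, le_div_iff₀ (by positivity)]
      exact mul_le_mul_of_nonneg_left hδd hB₀
    linarith

lemma sum_choose_mul_pow_mul_one_sub_pow {R : Type*} [CommRing R] (n : ℕ) (x : R) :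
    ∑ m ∈ range (n + 1), (n.choose m : R) * x ^ m * (1 - x) ^ (n - m) = 1 := by
  have binomial := add_pow x (1 - x) n
  rw [add_sub_cancel, one_pow] at binomial
  exact (sum_congr rfl fun m _ => mul_rotate _ _ _).trans binomial.symm

lemma sum_sq_sub_div_mul_choose_mul_pow {n : ℕ} (hn : n ≠ 0) {x : ℝ} (hx : x ∈ Set.Icc 0 1) :
    ∑ m ∈ range (n + 1), (x - m / n) ^ 2 * ((n.choose m : ℝ) * x ^ m * (1 - x) ^ (n - m)) =
      x * (1 - x) / n := by
  rw [← Fin.sum_univ_eq_sum_range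
    (fun m => (x - m / n) ^ 2 * ((n.choose m : ℝ) * x ^ m * (1 - x) ^ (n - m)))]
  simpa [bernstein.z, bernstein_apply] using bernstein.variance hn ⟨x, hx⟩

lemma choose_mul_pow_mul_one_sub_pow_nonneg (n m : ℕ) {x : ℝ} (hx : x ∈ Set.Icc 0 1) :
    0 ≤ (n.choose m : ℝ) * x ^ m * (1 - x) ^ (n - m) := by
  have := hx.1
  have := sub_nonneg.2 hx.2
  positivity

lemma sum_add_mul_sq_sub_div_mul_choose_mul_pow {n : ℕ} (hn : n ≠ 0) {x : ℝ}
    (hx : x ∈ Set.Icc 0 1) (a b : ℝ) :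
    ∑ m ∈ range (n + 1), (a + b * (x - m / n) ^ 2) *
        ((n.choose m : ℝ) * x ^ m * (1 - x) ^ (n - m)) = a + b * (x * (1 - x) / n) := by
  calc _ = a * ∑ m ∈ range (n + 1), (n.choose m : ℝ) * x ^ m * (1 - x) ^ (n - m) +
        b * ∑ m ∈ range (n + 1),
          (x - m / n) ^ 2 * ((n.choose m : ℝ) * x ^ m * (1 - x) ^ (n - m)) := by
        rw [mul_sum, mul_sum, ← sum_add_distrib]
        exact sum_congr rfl fun m _ => by ring
    _ = a + b * (x * (1 - x) / n) := by
        rw [sum_choose_mul_pow_mul_one_sub_pow, sum_sq_sub_div_mul_choose_mul_pow hn hx, mul_one]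

/-- Quantitative Bernstein approximation: if `|f x₁ - f x₂| < ε/2` whenever
`|x₁ - x₂| < δ` on `[0,1]`, and `n > 4‖f‖/(ε δ²)`, then `|f x - f_n x| < ε` on `[0,1]`. -/
theorem bernstein_approx (f : ℝ → ℝ) (hf : ContinuousOn f (Set.Icc 0 1))
    (ε δ : ℝ) (hε : 0 < ε) (hδ : 0 < δ)
    (hmod : ∀ x₁ ∈ Set.Icc (0 : ℝ) 1, ∀ x₂ ∈ Set.Icc (0 : ℝ) 1,
      |x₁ - x₂| < δ → |f x₁ - f x₂| < ε / 2)
    (n : ℕ) (hn : (n : ℝ) > 4 * (⨆ x : Set.Icc (0 : ℝ) 1, |f x|) / (ε * δ ^ 2)) :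
    ∀ x ∈ Set.Icc (0 : ℝ) 1,
      |f x - ∑ m ∈ Finset.range (n + 1),
        f ((m : ℝ) / (n : ℝ)) * ((n.choose m : ℝ) * x ^ m * (1 - x) ^ (n - m))| < ε := by
  intro x hx
  set M := ⨆ y : Set.Icc (0 : ℝ) 1, |f y|
  have hM : ∀ y ∈ Set.Icc (0 : ℝ) 1, |f y| ≤ M := fun y hy => isCompact_Icc.abs_le_iSup_abs hf hy
  have hM₀ : 0 ≤ M := (abs_nonneg _).trans (hM x hx)
  have hn₀ : (0 : ℝ) < n := lt_of_le_of_lt (by positivity) hn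
  have hpoint : ∀ m ∈ range (n + 1),
      |f x - f (m / n)| ≤ ε / 2 + 2 * M / δ ^ 2 * (x - m / n) ^ 2 := by
    intro m hm
    have hmn : (m : ℝ) / n ∈ Set.Icc (0 : ℝ) 1 :=
      ⟨by positivity, div_le_one_of_le₀ (by exact_mod_cast mem_range_succ_iff.1 hm) hn₀.le⟩
    refine abs_le_add_div_sq_mul_sq (by positivity) hδ ?_ (hmod x hx _ hmn)
    calc |f x - f (m / n)| ≤ |f x| + |f (m / n)| := abs_sub _ _
      _ ≤ 2 * M := by linarith [hM x hx, hM _ hmn]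
  have hvar : x * (1 - x) ≤ 1 / 4 := by nlinarith [sq_nonneg (x - 1 / 2)]
  have hMn : 4 * M < n * (ε * δ ^ 2) := (div_lt_iff₀ (by positivity)).1 hn
  calc _ ≤ ∑ m ∈ range (n + 1), (ε / 2 + 2 * M / δ ^ 2 * (x - m / n) ^ 2) *
          ((n.choose m : ℝ) * x ^ m * (1 - x) ^ (n - m)) :=
        abs_sub_sum_mul_le_sum_mul (fun m _ => choose_mul_pow_mul_one_sub_pow_nonneg n m hx)
          (sum_choose_mul_pow_mul_one_sub_pow n x) hpoint
    _ = ε / 2 + 2 * M / δ ^ 2 * (x * (1 - x) / n) :=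
        sum_add_mul_sq_sub_div_mul_choose_mul_pow (by exact_mod_cast hn₀.ne') hx _ _
    _ ≤ ε / 2 + 2 * M / δ ^ 2 * (1 / 4 / n) := by gcongr
    _ < ε / 2 + ε / 2 := by
        rw [div_mul_div_comm, add_lt_add_iff_left, div_lt_div_iff₀ (by positivity) two_pos]
        linarith
    _ = ε := add_halves ε
end

section
/- Let f be a continuous real-valued function on [0,1], and for n ≥ 1 let f_n be its n-th Bernstein polynomial and F_n the polynomial with F_n(0) = 0 and F_n' = f_n. Fix c ∈ (0,1), and for each n let Q_n be the polynomial obtained by dividing F_n(x) − F_n(c) by x − c, so that F_n(x) − F_n(c) = Q_n(x)(x − c) for all x and Q_n(c) = F_n'(c) = f_n(c). Then for all m, n ≥ 1, sup_{x ∈ [0,1]} |Q_m(x) − Q_n(x)| ≤ sup_{x ∈ [0,1]} |f_m(x) − f_n(x)|. -/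
/-- The `n`-th Bernstein polynomial of `f`. -/
noncomputable def bern (f : ℝ → ℝ) (n : ℕ) (x : ℝ) : ℝ :=
  ∑ m ∈ Finset.range (n + 1),
    f ((m : ℝ) / (n : ℝ)) * ((n.choose m : ℝ) * x ^ m * (1 - x) ^ (n - m))

/-- The primitive `F_n` of the `n`-th Bernstein polynomial of `f` vanishing at `0`. -/
noncomputable def FF (f : ℝ → ℝ) (n : ℕ) (x : ℝ) : ℝ :=
  ∑ m ∈ Finset.range (n + 1),
    f ((m : ℝ) / (n : ℝ)) / ((n : ℝ) + 1) *
      ∑ j ∈ Finset.Icc (m + 1) (n + 1),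
        ((n + 1).choose j : ℝ) * x ^ j * (1 - x) ^ (n + 1 - j)

/-! `Q_m - Q_n` is the divided difference of `F_m - F_n` at `c`, and `(F_m - F_n)' = f_m - f_n`.
By the mean value theorem each value of `Q_m - Q_n` at `x ∈ [0,1]` is a value of `f_m - f_n`
at a point between `x` and `c`, hence in `[0,1]`. The identity `F_n' = f_n` becomes a telescoping
sum once `F_n` is written in the basis `bernsteinPolynomial ℝ (n + 1) j`. -/

open Polynomial Finset

theorem derivative_sum_bernsteinPolynomial_Icc {R : Type*} [CommRing R] {m n : ℕ} (hmn : m ≤ n) :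
    derivative (∑ j ∈ Icc (m + 1) (n + 1), bernsteinPolynomial R (n + 1) j) =
      (n + 1) * bernsteinPolynomial R n m := by
  have telescope := sum_Icc_sub hmn (bernsteinPolynomial R n)
  rw [bernsteinPolynomial.eq_zero_of_lt R n.lt_succ_self, sum_sub_distrib] at telescope
  rw [← image_add_right_Icc, sum_image fun _ _ _ _ => Nat.add_right_cancel, derivative_sum]
  simp only [bernsteinPolynomial.derivative_succ_aux, ← mul_sum, sum_sub_distrib]
  linear_combination (-(n : R[X]) - 1) * telescope

theorem eval_bernsteinPolynomial {R : Type*} [CommRing R] (n ν : ℕ) (x : R) :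
    (bernsteinPolynomial R n ν).eval x = n.choose ν * x ^ ν * (1 - x) ^ (n - ν) := by
  simp [bernsteinPolynomial]

noncomputable def bernsteinApprox (f : ℝ → ℝ) (n : ℕ) : ℝ[X] :=
  ∑ m ∈ range (n + 1), C (f (m / n)) * bernsteinPolynomial ℝ n m

noncomputable def bernsteinPrimitive (f : ℝ → ℝ) (n : ℕ) : ℝ[X] :=
  ∑ m ∈ range (n + 1),
    C (f (m / n) / (n + 1)) * ∑ j ∈ Icc (m + 1) (n + 1), bernsteinPolynomial ℝ (n + 1) j

theorem bern_eq_eval_bernsteinApprox (f : ℝ → ℝ) (n : ℕ) :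
    bern f n = fun x => (bernsteinApprox f n).eval x := by
  ext x
  simp [bernsteinApprox, bern, eval_finsetSum, eval_bernsteinPolynomial]

theorem FF_eq_eval_bernsteinPrimitive (f : ℝ → ℝ) (n : ℕ) :
    FF f n = fun x => (bernsteinPrimitive f n).eval x := by
  ext x
  simp [bernsteinPrimitive, FF, eval_finsetSum, eval_bernsteinPolynomial]

theorem derivative_bernsteinPrimitive (f : ℝ → ℝ) (n : ℕ) :
    derivative (bernsteinPrimitive f n) = bernsteinApprox f n := by
  rw [bernsteinPrimitive, bernsteinApprox, derivative_sum]
  refine sum_congr rfl fun m hm => ?_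
  rw [derivative_C_mul, derivative_sum_bernsteinPolynomial_Icc (Nat.lt_succ_iff.1 (mem_range.1 hm)),
    ← mul_assoc, show ((n : ℝ[X]) + 1) = C ((n : ℝ) + 1) by simp, ← C_mul,
    div_mul_cancel₀ _ (by positivity)]

theorem hasDerivAt_FF (f : ℝ → ℝ) (n : ℕ) (x : ℝ) : HasDerivAt (FF f n) (bern f n x) x := by
  rw [FF_eq_eval_bernsteinPrimitive, bern_eq_eval_bernsteinApprox, ← derivative_bernsteinPrimitive]
  exact (bernsteinPrimitive f n).hasDerivAt x

theorem continuous_bern (f : ℝ → ℝ) (n : ℕ) : Continuous (bern f n) := by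
  rw [bern_eq_eval_bernsteinApprox]
  exact (bernsteinApprox f n).continuous

theorem exists_mem_uIcc_sub_eq_mul_sub {G g : ℝ → ℝ} (hG : ∀ y, HasDerivAt G (g y) y) (x c : ℝ) :
    ∃ ξ ∈ Set.uIcc x c, G x - G c = g ξ * (x - c) := by
  have hGc : Continuous G := continuous_iff_continuousAt.2 fun y => (hG y).continuousAt
  rcases lt_trichotomy x c with hxc | rfl | hcx
  · obtain ⟨ξ, hξ, hslope⟩ := exists_hasDerivAt_eq_slope G g hxc hGc.continuousOn fun y _ => hG y
    refine ⟨ξ, Set.Icc_subset_uIcc (Set.Ioo_subset_Icc_self hξ), ?_⟩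
    rw [hslope, ← neg_sub c x, mul_neg, div_mul_cancel₀ _ (sub_ne_zero.2 hxc.ne'), neg_sub]
  · exact ⟨x, Set.left_mem_uIcc, by ring⟩
  · obtain ⟨ξ, hξ, hslope⟩ := exists_hasDerivAt_eq_slope G g hcx hGc.continuousOn fun y _ => hG y
    refine ⟨ξ, Set.Icc_subset_uIcc' (Set.Ioo_subset_Icc_self hξ), ?_⟩
    rw [hslope, div_mul_cancel₀ _ (sub_ne_zero.2 hcx.ne')]

theorem sup_abs_Q_sub_le_general (f : ℝ → ℝ)
    (c : ℝ) (hc : c ∈ Set.Ioo (0 : ℝ) 1) (Q : ℕ → ℝ → ℝ)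
    (hQ : ∀ k, 1 ≤ k → ∀ x : ℝ, FF f k x - FF f k c = Q k x * (x - c))
    (hQc : ∀ k, 1 ≤ k → Q k c = bern f k c)
    (m n : ℕ) (hm : 1 ≤ m) (hn : 1 ≤ n) :
    (⨆ x : Set.Icc (0 : ℝ) 1, |Q m x - Q n x|) ≤
      ⨆ x : Set.Icc (0 : ℝ) 1, |bern f m x - bern f n x| := by
  have hG (y : ℝ) : HasDerivAt (fun y => FF f m y - FF f n y) (bern f m y - bern f n y) y :=
    (hasDerivAt_FF f m y).sub (hasDerivAt_FF f n y)
  have hbdd : BddAbove (Set.range fun x : Set.Icc (0 : ℝ) 1 => |bern f m x - bern f n x|) :=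
    (isCompact_range (((continuous_bern f m).sub (continuous_bern f n)).abs.comp
      continuous_subtype_val)).bddAbove
  refine ciSup_le fun x => ?_
  obtain ⟨ξ, hξ, hmvt⟩ := exists_mem_uIcc_sub_eq_mul_sub hG x c
  refine le_ciSup_of_le hbdd ⟨ξ, Set.uIcc_subset_Icc x.2 (Set.Ioo_subset_Icc_self hc) hξ⟩
    (le_of_eq (congrArg abs ?_))
  change Q m x - Q n x = bern f m ξ - bern f n ξ
  rcases eq_or_ne (x : ℝ) c with hxc | hxc
  · rw [hxc, Set.uIcc_self, Set.mem_singleton_iff] at hξ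
    rw [hxc, hξ, hQc m hm, hQc n hn]
  · refine mul_right_cancel₀ (sub_ne_zero.2 hxc) ?_
    rw [sub_mul, ← hQ m hm, ← hQ n hn, ← hmvt]
    ring

/-- If `Q k` is the quotient of `F_k(x) - F_k(c)` by `x - c` (with `Q k c = f_k(c)`),
then `‖Q_m - Q_n‖ ≤ ‖f_m - f_n‖` on `[0,1]`. -/
theorem sup_abs_Q_sub_le (f : ℝ → ℝ) (hf : ContinuousOn f (Set.Icc 0 1))
    (c : ℝ) (hc : c ∈ Set.Ioo (0 : ℝ) 1) (Q : ℕ → ℝ → ℝ)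
    (hQ : ∀ k, 1 ≤ k → ∀ x : ℝ, FF f k x - FF f k c = Q k x * (x - c))
    (hQc : ∀ k, 1 ≤ k → Q k c = bern f k c)
    (m n : ℕ) (hm : 1 ≤ m) (hn : 1 ≤ n) :
    (⨆ x : Set.Icc (0 : ℝ) 1, |Q m x - Q n x|) ≤
      ⨆ x : Set.Icc (0 : ℝ) 1, |bern f m x - bern f n x| :=
  sup_abs_Q_sub_le_general f c hc Q hQ hQc m n hm hn
end
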